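/- For every real number s ≥ 1 and every positive integer d, there exists a real number s' ≥ s such that the following holds: if B₁ and B₂ are convex shapes in ℝ^d that are ⊑_s-comparable and vol(B₁) ≤ vol(B₂), then B₁ ⊑_{s'} B₂. -/

import Mathlib

open MeasureTheory Set Pointwise Metric Function
open scoped RealInnerProductSpace ENNReal

noncomputable section

/-- `ℝ^d` as a Euclidean space. -/
abbrev Euc (d : ℕ) := EuclideanSpace ℝ (Fin d)

/-- A shape: a compact set that is non-degenerate, i.e. not contained in a proper
affine subspace. -/
def IsShape {d : ℕ} (B : Set (Euc d)) : Prop :=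
  IsCompact B ∧ affineSpan ℝ B = ⊤

/-- `B₁ ⊑ₛ B₂`: for every `x ∈ B₂` there is a translate `B₁'` of `B₁` with `x ∈ B₁'`
and `vol (B₁' ∩ B₂) ≥ vol B₁ / s`. -/
def SqIn {d : ℕ} (s : ℝ) (B₁ B₂ : Set (Euc d)) : Prop :=
  ∀ x ∈ B₂, ∃ v : Euc d, x ∈ v +ᵥ B₁ ∧
    volume B₁ / ENNReal.ofReal s ≤ volume ((v +ᵥ B₁) ∩ B₂)

/-- `B₁` and `B₂` are `⊑ₛ`-comparable. -/
def SqComparable {d : ℕ} (s : ℝ) (B₁ B₂ : Set (Euc d)) : Prop :=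
  SqIn s B₁ B₂ ∨ SqIn s B₂ B₁

/-- `B₁ ≤ₖ B₂`: some translate of `B₁` is contained in `k • B₂`. -/
def LeK {d : ℕ} (k : ℝ) (B₁ B₂ : Set (Euc d)) : Prop :=
  ∃ v : Euc d, v +ᵥ B₁ ⊆ k • B₂

/-- `B₁ ≤_{k,s} B₂`: for every `x ∈ k • B₂` there are a translate `B₁'` of `B₁` and a
translate `B₁''` of `s • B₁` with `x ∈ B₁''` and `B₁' ⊆ B₁'' ∩ k • B₂`. -/
def LeKS {d : ℕ} (k s : ℝ) (B₁ B₂ : Set (Euc d)) : Prop :=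
  ∀ x ∈ k • B₂, ∃ v w : Euc d,
    x ∈ w +ᵥ (s • B₁) ∧ v +ᵥ B₁ ⊆ (w +ᵥ (s • B₁)) ∩ (k • B₂)

/-- An intersection representation of a graph in `ℝ^d`. -/
def IsIntersectionRep {V : Type*} {d : ℕ} (G : SimpleGraph V) (φ : V → Set (Euc d)) : Prop :=
  (∀ v, (φ v).Nonempty) ∧ ∀ u v : V, u ≠ v → ((φ u ∩ φ v).Nonempty ↔ G.Adj u v)

/-- A representation is `c`-thin if every point lies in at most `c` of the sets. -/
def IsThin {V : Type*} {d : ℕ} (c : ℝ) (φ : V → Set (Euc d)) : Prop :=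
  ∀ x : Euc d, ({v : V | x ∈ φ v}.ncard : ℝ) ≤ c

/-- A `(c,⊑ₛ)`-tame representation. -/
def IsTame {V : Type*} {d : ℕ} (c s : ℝ) (G : SimpleGraph V) (φ : V → Set (Euc d)) : Prop :=
  IsIntersectionRep G φ ∧ IsThin c φ ∧
    (∀ v, Convex ℝ (φ v) ∧ IsShape (φ v)) ∧
    ∀ u v : V, SqComparable s (φ u) (φ v)

/-- An `S`-shaped representation: each vertex is assigned a translate of a shape in `S`. -/
def IsSShaped {V : Type*} {d : ℕ} (S : Set (Set (Euc d))) (φ : V → Set (Euc d)) : Prop :=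
  ∀ v, ∃ B ∈ S, ∃ t : Euc d, φ v = t +ᵥ B

/-- `X` is a balanced separator: every component of `G - X` has at most `(2/3)|V(G)|`
vertices. -/
def IsBalancedSeparator {V : Type*} [Fintype V] (G : SimpleGraph V) (X : Set V) : Prop :=
  ∀ C : (G.induce Xᶜ).ConnectedComponent,
    (C.supp.ncard : ℝ) ≤ 2 / 3 * Fintype.card V

/-- `L_{G,≺,r}(v)`, where the linear ordering `≺` is encoded by an injective `ρ : V → ℕ`:
the set of vertices `x ⪯ v` reachable from `v` by a path of length at most `r` all of whose
internal vertices are `≻ v`. -/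
def Lset {V : Type*} (G : SimpleGraph V) (ρ : V → ℕ) (r : ℕ) (v : V) : Set V :=
  {x | ρ x ≤ ρ v ∧ ∃ p : G.Walk v x, p.IsPath ∧ p.length ≤ r ∧
    ∀ z ∈ p.support, z ≠ v → z ≠ x → ρ v < ρ z}

/-- The height of a set: the least `h ≥ 0` such that the set lies between two parallel
hyperplanes at distance `h`. -/
def heightOf {d : ℕ} (B : Set (Euc d)) : ℝ :=
  sInf {h : ℝ | 0 ≤ h ∧ ∃ u : Euc d, ‖u‖ = 1 ∧ ∃ a : ℝ,
    ∀ x ∈ B, a ≤ (inner ℝ u x : ℝ) ∧ (inner ℝ u x : ℝ) ≤ a + h}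

/-- A parallelepiped with center `p` and sides `v₁, …, v_d`. -/
def IsParallelepiped {d : ℕ} (T : Set (Euc d)) : Prop :=
  ∃ (p : Euc d) (v : Fin d → Euc d), LinearIndependent ℝ v ∧
    T = {x | ∃ α : Fin d → ℝ, (∀ i, α i ∈ Set.Icc (-1 : ℝ) 1) ∧ x = p + ∑ i, α i • v i}

/-- `T` is an envelope of `B`: a parallelepiped of smallest volume containing `B`. -/
def IsEnvelope {d : ℕ} (T B : Set (Euc d)) : Prop :=
  IsParallelepiped T ∧ B ⊆ T ∧
    ∀ T' : Set (Euc d), IsParallelepiped T' → B ⊆ T' → volume T ≤ volume T'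

/-- A box in `ℝ^d`: a product of `d` closed intervals. -/
def IsBox {d : ℕ} (B : Set (Euc d)) : Prop :=
  ∃ a b : Fin d → ℝ, B = {x : Euc d | ∀ i, x i ∈ Set.Icc (a i) (b i)}

/-- `Q` is `k'`-fat: every ball `B` centered in `Q` satisfies
`vol (B ∩ Q) ≥ min (vol B / k') (vol Q)`. -/
def IsFat {d : ℕ} (k' : ℝ) (Q : Set (Euc d)) : Prop :=
  ∀ x ∈ Q, ∀ ρ : ℝ, 0 < ρ →
    min (volume (Metric.closedBall x ρ) / ENNReal.ofReal k') (volume Q)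
      ≤ volume (Metric.closedBall x ρ ∩ Q)

/-- The strong product of two simple graphs. -/
def strongProd {α β : Type*} (G : SimpleGraph α) (H : SimpleGraph β) :
    SimpleGraph (α × β) where
  Adj x y := x ≠ y ∧ (x.1 = y.1 ∨ G.Adj x.1 y.1) ∧ (x.2 = y.2 ∨ H.Adj x.2 y.2)
  symm := ⟨by
    rintro ⟨a1, a2⟩ ⟨b1, b2⟩ ⟨hne, h1, h2⟩
    refine ⟨hne.symm, ?_, ?_⟩
    · rcases h1 with h | h
      · exact Or.inl h.symm
      · exact Or.inr h.symm
    · rcases h2 with h | h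
      · exact Or.inl h.symm
      · exact Or.inr h.symm⟩
  loopless := ⟨by
    rintro ⟨a1, a2⟩ ⟨hne, -, -⟩
    exact hne rfl⟩

/-- The graph `G⁺(N, l)`: add hubs `v₁, …, v_N` and internally disjoint paths of length `l`
from each hub to each vertex of `G`.  The internal vertices of the path from hub `i` to
vertex `u` are `(i, u, 0), …, (i, u, l-2)`. -/
def plusGraph {V : Type*} (G : SimpleGraph V) (N l : ℕ) :
    SimpleGraph (V ⊕ (Fin N ⊕ Fin N × V × Fin (l - 1))) :=
  SimpleGraph.fromRel (fun x y =>
    match x, y with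
    | Sum.inl u, Sum.inl w => G.Adj u w
    | Sum.inr (Sum.inl _), Sum.inl _ => l = 1
    | Sum.inr (Sum.inl i), Sum.inr (Sum.inr (j, _, t)) => i = j ∧ (t : ℕ) = 0
    | Sum.inr (Sum.inr (i, u, t)), Sum.inr (Sum.inr (j, w, t')) =>
        i = j ∧ u = w ∧ (t' : ℕ) = (t : ℕ) + 1
    | Sum.inr (Sum.inr (_, u, t)), Sum.inl w => u = w ∧ (t : ℕ) = l - 2
    | _, _ => False)

/-- `γ_d`: the supremum over affine hyperplanes `H` of the `(d-1)`-dimensional Hausdorff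
measure of the intersection of `H` with the unit cube. -/
def gammaConst (d : ℕ) : ℝ :=
  sSup {γ : ℝ | ∃ (u : Euc d) (a : ℝ), ‖u‖ = 1 ∧
    γ = (MeasureTheory.Measure.hausdorffMeasure ((d : ℝ) - 1)
      ({x : Euc d | (inner ℝ u x : ℝ) = a} ∩ {x : Euc d | ∀ i, x i ∈ Set.Icc (0 : ℝ) 1})).toReal}

/-- The sequence `ℓ_h`: `ℓ_1 = 1` and `ℓ_{h+1} = ℓ_h / (2(h+1))`. -/
def ellSeq : ℕ → ℝ
  | 0 => 2
  | n + 1 => ellSeq n / (2 * (n + 1))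

/-- The trapezoid `T_h` with vertices `(0,0)`, `(ℓ_h,0)`, `(ℓ_h, hℓ_h)`, `(0, 2hℓ_h)`. -/
def trapezoidShape (h : ℕ) : Set (Euc 2) :=
  convexHull ℝ {(!₂[0, 0] : Euc 2), !₂[ellSeq h, 0], !₂[ellSeq h, h * ellSeq h],
    !₂[0, 2 * h * ellSeq h]}

/-- An axis-aligned square `S_h` with sides of length `ℓ_h`. -/
def squareShape (h : ℕ) : Set (Euc 2) :=
  {x : Euc 2 | x 0 ∈ Set.Icc 0 (ellSeq h) ∧ x 1 ∈ Set.Icc 0 (ellSeq h)}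

/-- The set `S*` of shapes. -/
def SStar : Set (Set (Euc 2)) :=
  {B | ∃ h : ℕ, 0 < h ∧ (B = trapezoidShape h ∨ B = squareShape h)}

/-- A class of finite graphs is `⊑`-representable. -/
def SqRepresentable (𝒢 : ∀ V : Type, Fintype V → SimpleGraph V → Prop) : Prop :=
  ∃ d c s : ℕ, 0 < d ∧ 0 < c ∧ 0 < s ∧
    ∀ (V : Type) (instV : Fintype V) (G : SimpleGraph V), 𝒢 V instV G →
      ∃ S : Set (Set (Euc d)), (∀ B ∈ S, Convex ℝ B ∧ IsShape B) ∧
        S.Pairwise (SqComparable (s : ℝ)) ∧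
        ∃ φ : V → Set (Euc d), IsIntersectionRep G φ ∧ IsThin (c : ℝ) φ ∧ IsSShaped S φ

end

/-!
If `B₂ ⊑ₛ B₁`, some translate `K` of `B₂` meets `B₁` in a set `C` with `vol K ≤ s · vol C`.
Fix `a ∈ K`. The `n` homothetic copies of `C` centred at `a` with ratios `1 - i/(2n)`, `i < n`,
lie in `K` by convexity and each has volume at least `2⁻ᵈ vol C`, so for `n > 2ᵈ s` two of them
meet. This gives `c, c' ∈ C` with `c = λ a + (1 - λ) c'` and `λ ≥ 1/(2n)`. The translate of `B₁`
moving `c` to `a` then contains `a` and the copy of `C` scaled by `λ` towards `a`, which also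
lies in `K`; hence it meets `K` in volume at least `(2n)⁻ᵈ vol C ≥ vol B₁ / (s (2n)ᵈ)`.
-/

open AffineMap Module

section Homothety

variable {E : Type*} [NormedAddCommGroup E] [NormedSpace ℝ E] [MeasurableSpace E] [BorelSpace E]
  [FiniteDimensional ℝ E] (μ : Measure E) [μ.IsAddHaarMeasure]

theorem measurableSet_image_homothety {C : Set E} (hC : MeasurableSet C) (a : E) {r : ℝ}
    (hr : r ≠ 0) : MeasurableSet (homothety a r '' C) :=
  hC.image_of_continuousOn_injOn (homothety_continuous a r).continuousOn
    (homothety_injective a hr).injOn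

theorem measure_le_pow_mul_measure_image_homothety {k : ℕ} (hk : 0 < k) {r : ℝ}
    (hr : (k : ℝ)⁻¹ ≤ r) (a : E) (C : Set E) :
    μ C ≤ (k : ℝ≥0∞) ^ finrank ℝ E * μ (homothety a r '' C) := by
  have hkr : 1 ≤ k * r := by
    rwa [inv_le_iff_one_le_mul₀' (by exact_mod_cast hk)] at hr
  have hr0 : 0 ≤ r := (inv_nonneg.2 k.cast_nonneg).trans hr
  rw [Measure.addHaar_image_homothety, ← mul_assoc, abs_of_nonneg (pow_nonneg hr0 _),
    ← ENNReal.ofReal_natCast, ← ENNReal.ofReal_pow k.cast_nonneg,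
    ← ENNReal.ofReal_mul (by positivity), ← mul_pow]
  exact le_mul_of_one_le_left' (ENNReal.one_le_ofReal.2 (one_le_pow₀ hkr))

theorem exists_homothety_mem_of_measure_lt {K C : Set E} (hK : Convex ℝ K) (hCK : C ⊆ K)
    (hC : MeasurableSet C) {a : E} (ha : a ∈ K) {n : ℕ}
    (hn : 2 ^ finrank ℝ E * μ K < n * μ C) :
    ∃ r : ℝ, 0 ≤ r ∧ r ≤ 1 - (2 * n : ℝ)⁻¹ ∧ ∃ c ∈ C, homothety a r c ∈ C := by
  have hn0 : (0 : ℝ) < n := Nat.cast_pos.2 (Nat.pos_of_ne_zero (by rintro rfl; simp at hn))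
  set ρ : ℕ → ℝ := fun i => 1 - i / (2 * n)
  have hρ : ∀ i < n, 2⁻¹ ≤ ρ i ∧ ρ i ≤ 1 := fun i hi => by
    have : (i : ℝ) < n := by exact_mod_cast hi
    have : (i : ℝ) / (2 * n) ≤ 2⁻¹ := by rw [div_le_iff₀ (by positivity)]; linarith
    have : 0 ≤ (i : ℝ) / (2 * n) := by positivity
    constructor <;> linarith
  set t : ℕ → Set E := fun i => homothety a (ρ i) '' C
  have ht : ∀ i ∈ Finset.range n, t i ⊆ K := by
    rintro i hi _ ⟨p, hp, rfl⟩
    have := hρ i (Finset.mem_range.1 hi)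
    rw [homothety_eq_lineMap]
    exact hK.lineMap_mem ha (hCK hp) ⟨by linarith, this.2⟩
  have hsum : μ.restrict K univ < ∑ i ∈ Finset.range n, μ.restrict K (t i) := by
    rw [Measure.restrict_apply_univ,
      Finset.sum_congr rfl fun i hi => Measure.restrict_eq_self μ (ht i hi)]
    refine (ENNReal.mul_lt_mul_iff_right (a := 2 ^ finrank ℝ E) (by simp) (by simp)).1 ?_
    calc 2 ^ finrank ℝ E * μ K < n * μ C := hn
      _ = ∑ i ∈ Finset.range n, μ C := by simp
      _ ≤ ∑ i ∈ Finset.range n, 2 ^ finrank ℝ E * μ (t i) := Finset.sum_le_sum fun i hi => by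
          exact_mod_cast measure_le_pow_mul_measure_image_homothety μ two_pos
            (by rw [Nat.cast_ofNat]; exact (hρ i (Finset.mem_range.1 hi)).1) a C
      _ = 2 ^ finrank ℝ E * ∑ i ∈ Finset.range n, μ (t i) := (Finset.mul_sum ..).symm
  have key : ∀ i j, i < j → j < n → ∀ c ∈ C, ∀ c' ∈ C,
      homothety a (ρ i) c = homothety a (ρ j) c' →
      ∃ r : ℝ, 0 ≤ r ∧ r ≤ 1 - (2 * n : ℝ)⁻¹ ∧ ∃ c ∈ C, homothety a r c ∈ C := by
    intro i j hij hj c hc c' hc' heq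
    obtain ⟨hρi, hρi'⟩ := hρ i (hij.trans hj)
    obtain ⟨hρj, -⟩ := hρ j hj
    have hgap : ρ j + (2 * n : ℝ)⁻¹ ≤ ρ i := by
      have : (i : ℝ) + 1 ≤ j := by exact_mod_cast hij
      simp only [ρ]
      field_simp
      linarith
    have hc_eq : homothety a (ρ j / ρ i) c' = c := by
      rw [div_eq_inv_mul, homothety_mul_apply, ← heq, ← homothety_mul_apply,
        inv_mul_cancel₀ (by linarith), homothety_one, AffineMap.id_apply]
    refine ⟨ρ j / ρ i, div_nonneg (by linarith) (by linarith), ?_, c', hc', hc_eq ▸ hc⟩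
    rw [div_le_iff₀ (by linarith)]
    nlinarith [mul_le_mul_of_nonneg_right hρi' (inv_nonneg.2 (by positivity : (0 : ℝ) ≤ 2 * n))]
  obtain ⟨i, hi, j, hj, hij, p, ⟨c, hc, hcp⟩, c', hc', hc'p⟩ :=
    exists_nonempty_inter_of_measure_univ_lt_sum_measure _
      (fun i hi => (measurableSet_image_homothety hC a
        (by linarith [hρ i (Finset.mem_range.1 hi)])).nullMeasurableSet) hsum
  rw [Finset.mem_range] at hi hj
  rcases hij.lt_or_gt with h | h
  · exact key i j h hj c hc c' hc' (hcp.trans hc'p.symm)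
  · exact key j i h hi c' hc' c hc (hc'p.trans hcp.symm)

theorem exists_mem_vadd_measure_le_mul_measure_inter {B K C : Set E} (hB : Convex ℝ B)
    (hK : Convex ℝ K) (hCB : C ⊆ B) (hCK : C ⊆ K) (hC : MeasurableSet C) {n : ℕ}
    (hn : 2 ^ finrank ℝ E * μ K < n * μ C) {a : E} (ha : a ∈ K) :
    ∃ v : E, a ∈ v +ᵥ B ∧ μ C ≤ ((2 * n : ℕ) : ℝ≥0∞) ^ finrank ℝ E * μ ((v +ᵥ B) ∩ K) := by
  obtain ⟨r, hr0, hr1, c, hc, hrc⟩ := exists_homothety_mem_of_measure_lt μ hK hCK hC ha hn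
  refine ⟨a - homothety a r c, ⟨homothety a r c, hCB hrc, sub_add_cancel _ _⟩, ?_⟩
  have hn0 : 0 < 2 * n := by
    have : n ≠ 0 := by rintro rfl; simp at hn
    omega
  have hinv : (0 : ℝ) ≤ (2 * n : ℝ)⁻¹ := by positivity
  refine (measure_le_pow_mul_measure_image_homothety μ hn0 (r := 1 - r)
    (by push_cast; linarith) a C).trans ?_
  gcongr
  rintro _ ⟨p, hp, rfl⟩
  refine ⟨⟨lineMap c p (1 - r), hB.lineMap_mem (hCB hc) (hCB hp) ⟨by linarith, by linarith⟩, ?_⟩,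
    ?_⟩
  · simp only [vadd_eq_add, homothety_apply, lineMap_apply, vsub_eq_sub]
    module
  · rw [homothety_eq_lineMap]
    exact hK.lineMap_mem ha (hCK hp) ⟨by linarith, by linarith⟩

end Homothety

section Comparability

variable {d : ℕ} {s : ℝ} {B₁ B₂ : Set (Euc d)}

theorem SqIn.mono {s' : ℝ} (hss' : s ≤ s') (h : SqIn s B₁ B₂) : SqIn s' B₁ B₂ := fun x hx =>
  let ⟨v, hxv, hv⟩ := h x hx
  ⟨v, hxv, (ENNReal.div_le_div_left (ENNReal.ofReal_le_ofReal hss') _).trans hv⟩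

theorem SqIn.of_vadd_right (w : Euc d) (h : SqIn s B₁ (w +ᵥ B₂)) : SqIn s B₁ B₂ := by
  intro x hx
  obtain ⟨v, hxv, hv⟩ := h (w + x) (vadd_mem_vadd_set hx)
  refine ⟨-w + v, ?_, ?_⟩
  · obtain ⟨b, hb, hbx⟩ := mem_vadd_set.1 hxv
    exact ⟨b, hb, show -w + v + b = x by
      rw [add_assoc, ← vadd_eq_add v, hbx, neg_add_cancel_left]⟩
  · rwa [← vadd_vadd, ← zero_vadd (Euc d) B₂, ← neg_add_cancel w, ← vadd_vadd, ← vadd_set_inter,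
      measure_vadd]

theorem SqIn.symm_of_volume_le (hs : 0 < s) (h₁ : Convex ℝ B₁) (h₁c : IsCompact B₁)
    (h₁ne : B₁.Nonempty) (h₂ : Convex ℝ B₂) (h₂c : IsCompact B₂) (h₂0 : volume B₂ ≠ 0)
    (hvol : volume B₁ ≤ volume B₂) (h : SqIn s B₂ B₁) :
    SqIn (s * (2 * (⌈s * 2 ^ d⌉₊ + 1)) ^ d) B₁ B₂ := by
  obtain ⟨y, hy⟩ := h₁ne
  obtain ⟨w, -, hw⟩ := h y hy
  set n := ⌈s * 2 ^ d⌉₊ + 1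
  set K := w +ᵥ B₂
  set C := K ∩ B₁
  have hK : volume K = volume B₂ := measure_vadd _ _ _
  have hKC : volume K ≤ ENNReal.ofReal s * volume C := by
    rw [hK, mul_comm]
    exact (ENNReal.div_le_iff_le_mul (Or.inl (by simpa using hs))
      (Or.inl ENNReal.ofReal_ne_top)).1 hw
  have hC0 : volume C ≠ 0 :=
    ((ENNReal.div_pos h₂0 ENNReal.ofReal_ne_top).trans_le hw).ne'
  have hCtop : volume C ≠ ⊤ := measure_ne_top_of_subset inter_subset_right h₁c.measure_ne_top
  have hn : 2 ^ finrank ℝ (Euc d) * volume K < n * volume C := by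
    have hsn : 2 ^ d * s < n := by
      have := Nat.le_ceil (s * 2 ^ d)
      push_cast [n]
      linarith
    have hsn' : (2 : ℝ≥0∞) ^ d * ENNReal.ofReal s < n := by
      rw [← ENNReal.ofReal_natCast, ← ENNReal.ofReal_ofNat, ← ENNReal.ofReal_pow zero_le_two,
        ← ENNReal.ofReal_mul (by positivity)]
      exact (ENNReal.ofReal_lt_ofReal_iff (by positivity)).2 hsn
    calc 2 ^ finrank ℝ (Euc d) * volume K ≤ 2 ^ d * ENNReal.ofReal s * volume C := by
          rw [finrank_euclideanSpace_fin, mul_assoc]; gcongr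
      _ < n * volume C := (ENNReal.mul_lt_mul_iff_left hC0 hCtop).2 hsn'
  have hCm : MeasurableSet C :=
    ((h₂c.vadd w).isClosed.inter h₁c.isClosed).measurableSet
  refine SqIn.of_vadd_right w fun a ha => ?_
  obtain ⟨v, hav, hv⟩ := exists_mem_vadd_measure_le_mul_measure_inter volume h₁ (h₂.vadd w)
    inter_subset_right inter_subset_left hCm hn ha
  refine ⟨v, hav, ENNReal.div_le_of_le_mul ?_⟩
  rw [finrank_euclideanSpace_fin] at hv
  calc volume B₁ ≤ volume K := hK ▸ hvol
    _ ≤ ENNReal.ofReal s * volume C := hKC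
    _ ≤ ENNReal.ofReal s * ((2 * n : ℕ) ^ d * volume ((v +ᵥ B₁) ∩ K)) := by gcongr
    _ = volume ((v +ᵥ B₁) ∩ K) * ENNReal.ofReal (s * (2 * (⌈s * 2 ^ d⌉₊ + 1)) ^ d) := by
      rw [ENNReal.ofReal_mul hs.le, ENNReal.ofReal_pow (by positivity),
        show (2 * (⌈s * 2 ^ d⌉₊ + 1) : ℝ) = ((2 * n : ℕ) : ℝ) by push_cast [n]; ring,
        ENNReal.ofReal_natCast]
      ring

end Comparability

theorem stmt10_general (s : ℝ) (hs : 1 ≤ s) (d : ℕ) :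
    ∃ s' : ℝ, s ≤ s' ∧ ∀ B₁ B₂ : Set (Euc d),
      Convex ℝ B₁ → Convex ℝ B₂ → IsShape B₁ → IsShape B₂ →
      SqComparable s B₁ B₂ → volume B₁ ≤ volume B₂ → SqIn s' B₁ B₂ := by
  have hss' : s ≤ s * (2 * (⌈s * 2 ^ d⌉₊ + 1)) ^ d :=
    le_mul_of_one_le_right (by linarith) (one_le_pow₀ (by linarith))
  refine ⟨_, hss', ?_⟩
  rintro B₁ B₂ hc₁ hc₂ ⟨hK₁, hspan₁⟩ ⟨hK₂, hspan₂⟩ (h | h) hvol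
  · exact h.mono hss'
  · have hint₁ := hc₁.interior_nonempty_iff_affineSpan_eq_top.2 hspan₁
    have hint₂ := hc₂.interior_nonempty_iff_affineSpan_eq_top.2 hspan₂
    exact h.symm_of_volume_le (by linarith) hc₁ hK₁ (hint₁.mono interior_subset) hc₂ hK₂
      (Measure.measure_pos_of_nonempty_interior _ hint₂).ne' hvol

theorem stmt10 (s : ℝ) (hs : 1 ≤ s) (d : ℕ) (hd : 0 < d) :
    ∃ s' : ℝ, s ≤ s' ∧ ∀ B₁ B₂ : Set (Euc d),
      Convex ℝ B₁ → Convex ℝ B₂ → IsShape B₁ → IsShape B₂ →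
      SqComparable s B₁ B₂ → volume B₁ ≤ volume B₂ → SqIn s' B₁ B₂ :=
  stmt10_general s hs d
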